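/- arXiv:1605.01766 — 8 statements merged into one kernel-verified Lean document; each statement's English description precedes it below -/
import Mathlib

section
/- If H = H₁ * H₂ is a free product decomposition of a subgroup H of G and H is verbally closed in G, then H₁ is verbally closed in G (and likewise H₂). -/
/-- A subgroup `H` of `G` is *verbally closed* if every coefficient-free equation
`w(x₁,…,xₙ) = h` with `h ∈ H` that has a solution in `G` also has a solution in `H`. -/
def VerballyClosed {G : Type*} [Group G] (H : Subgroup G) : Prop :=
  ∀ (n : ℕ) (w : FreeGroup (Fin n)) (h : G), h ∈ H →
    (∃ x : Fin n → G, FreeGroup.lift x w = h) →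
    ∃ x : Fin n → G, (∀ i, x i ∈ H) ∧ FreeGroup.lift x w = h

/-! Verbal closedness passes to retracts: a retraction `ρ : H →* K` fixes `k ∈ K`, so it maps a
solution of `w = k` in `H` to a solution in `K`. A free factor is a retract, since
`H₁ ∗ H₂ ≃* H₁ ⊔ H₂` and `Monoid.Coprod.fst` kills `H₂`. -/

theorem MonoidHom.map_freeGroup_lift {α M N : Type*} [Group M] [Group N] (f : M →* N)
    (x : α → M) (w : FreeGroup α) : f (FreeGroup.lift x w) = FreeGroup.lift (f ∘ x) w := by
  induction w using FreeGroup.induction_on <;> simp_all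

section VerballyClosed

variable {G : Type*} [Group G] {H K : Subgroup G}

theorem VerballyClosed.exists_subgroup_solution (hH : VerballyClosed H) {n : ℕ}
    (w : FreeGroup (Fin n)) (h : H) (hsol : ∃ x : Fin n → G, FreeGroup.lift x w = h) :
    ∃ y : Fin n → H, FreeGroup.lift y w = h := by
  obtain ⟨x, hxH, hxw⟩ := hH n w h h.2 hsol
  refine ⟨fun i => ⟨x i, hxH i⟩, Subtype.ext ?_⟩
  rw [← Subgroup.coe_subtype, H.subtype.map_freeGroup_lift]
  exact hxw

theorem VerballyClosed.of_retraction (hH : VerballyClosed H) (hKH : K ≤ H) (ρ : H →* K)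
    (hρ : ρ.comp (Subgroup.inclusion hKH) = MonoidHom.id K) : VerballyClosed K := by
  intro n w k hk hsol
  obtain ⟨y, hyw⟩ := hH.exists_subgroup_solution w ⟨k, hKH hk⟩ hsol
  refine ⟨fun i => ρ (y i), fun i => (ρ (y i)).2, ?_⟩
  have hρk : ρ ⟨k, hKH hk⟩ = ⟨k, hk⟩ := DFunLike.congr_fun hρ ⟨k, hk⟩
  rw [show (fun i => (ρ (y i) : G)) = K.subtype ∘ ρ ∘ y from rfl,
    ← K.subtype.map_freeGroup_lift, ← ρ.map_freeGroup_lift, hyw, hρk]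
  rfl

end VerballyClosed

namespace Subgroup

variable {G : Type*} [Group G] {H₁ H₂ : Subgroup G}

noncomputable def coprodEquivSupOfInjective
    (hinj : Function.Injective (Monoid.Coprod.lift H₁.subtype H₂.subtype)) :
    Monoid.Coprod H₁ H₂ ≃* ↥(H₁ ⊔ H₂) :=
  (MonoidHom.ofInjective hinj).trans (MulEquiv.subgroupCongr (by simp))

theorem coprodEquivSupOfInjective_symm_inclusion_left
    (hinj : Function.Injective (Monoid.Coprod.lift H₁.subtype H₂.subtype)) (k : H₁) :
    (coprodEquivSupOfInjective hinj).symm (inclusion le_sup_left k) = Monoid.Coprod.inl k := by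
  rw [MulEquiv.symm_apply_eq]
  rfl

theorem coprodEquivSupOfInjective_symm_inclusion_right
    (hinj : Function.Injective (Monoid.Coprod.lift H₁.subtype H₂.subtype)) (k : H₂) :
    (coprodEquivSupOfInjective hinj).symm (inclusion le_sup_right k) = Monoid.Coprod.inr k := by
  rw [MulEquiv.symm_apply_eq]
  rfl

end Subgroup

/-- If a verbally closed subgroup $H$ of $G$ decomposes as a free product $H₁ * H₂$,
then both free factors are verbally closed in $G$. -/
theorem freeFactor_verballyClosed {G : Type*} [Group G] (H H₁ H₂ : Subgroup G)
    (hinj : Function.Injective (Monoid.Coprod.lift H₁.subtype H₂.subtype))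
    (hsup : H₁ ⊔ H₂ = H)
    (hvc : VerballyClosed H) :
    VerballyClosed H₁ ∧ VerballyClosed H₂ := by
  subst hsup
  set e := Subgroup.coprodEquivSupOfInjective hinj
  constructor
  · refine hvc.of_retraction le_sup_left (Monoid.Coprod.fst.comp e.symm.toMonoidHom) ?_
    ext k
    simp [e, Subgroup.coprodEquivSupOfInjective_symm_inclusion_left]
  · refine hvc.of_retraction le_sup_right (Monoid.Coprod.snd.comp e.symm.toMonoidHom) ?_
    ext k
    simp [e, Subgroup.coprodEquivSupOfInjective_symm_inclusion_right]
end

section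
/- Let φ: G → Ḡ be a surjective group homomorphism whose kernel is a verbal subgroup of G (i.e., generated by all values in G of some set of words). If H is verbally closed in G, then φ(H) is verbally closed in Ḡ. -/
namespace FreeGroup

variable {α β G : Type*} [Group G]

theorem lift_map_apply (f : α → β) (x : β → G) (w : FreeGroup α) :
    lift x (map f w) = lift (x ∘ f) w :=
  lift_unique ((lift x).comp (map f)) (by simp)

theorem exists_finite_mem_range_map (w : FreeGroup α) :
    ∃ s : Set α, s.Finite ∧ w ∈ (map ((↑) : s → α)).range := by
  simp_rw [range_map, Subtype.range_coe]
  induction w using FreeGroup.induction_on with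
  | C1 => exact ⟨∅, Set.finite_empty, one_mem _⟩
  | of a => exact ⟨{a}, Set.finite_singleton a, Subgroup.subset_closure ⟨a, rfl, rfl⟩⟩
  | inv_of a ih =>
    obtain ⟨s, hs, hw⟩ := ih
    exact ⟨s, hs, inv_mem hw⟩
  | mul u v hu hv =>
    obtain ⟨s, hs, hu⟩ := hu
    obtain ⟨t, ht, hv⟩ := hv
    refine ⟨s ∪ t, hs.union ht, mul_mem ?_ ?_⟩
    · exact Subgroup.closure_mono (Set.image_mono Set.subset_union_left) hu
    · exact Subgroup.closure_mono (Set.image_mono Set.subset_union_right) hv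

end FreeGroup

open FreeGroup (lift lift_map_apply)

theorem MonoidHom.map_freeGroupLift {α G K : Type*} [Group G] [Group K] (φ : G →* K)
    (f : α → G) (w : FreeGroup α) : φ (lift f w) = lift (φ ∘ f) w :=
  FreeGroup.lift_unique (φ.comp (lift f)) (by simp)

namespace VerballyClosed

variable {G : Type*} [Group G] {H : Subgroup G}

theorem exists_solution_of_finite (hH : VerballyClosed H) {β : Type*} [Finite β]
    (w : FreeGroup β) {h : G} (hh : h ∈ H) (hsol : ∃ x : β → G, lift x w = h) :
    ∃ x : β → G, (∀ i, x i ∈ H) ∧ lift x w = h := by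
  obtain ⟨n, ⟨e⟩⟩ := Finite.exists_equiv_fin β
  obtain ⟨x, rfl⟩ := hsol
  obtain ⟨y, hyH, hy⟩ := hH n (FreeGroup.map e w) _ hh
    ⟨x ∘ e.symm, by rw [lift_map_apply, Function.comp_assoc, e.symm_comp_self]; rfl⟩
  exact ⟨y ∘ e, fun i => hyH (e i), by rwa [← lift_map_apply]⟩

theorem exists_solution (hH : VerballyClosed H) {α : Type*} (w : FreeGroup α) {h : G}
    (hh : h ∈ H) (hsol : ∃ x : α → G, lift x w = h) :
    ∃ x : α → G, (∀ i, x i ∈ H) ∧ lift x w = h := by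
  classical
  obtain ⟨s, hs, w, rfl⟩ := FreeGroup.exists_finite_mem_range_map w
  have := hs.to_subtype
  obtain ⟨x, rfl⟩ := hsol
  obtain ⟨y, hyH, hy⟩ :=
    hH.exists_solution_of_finite w hh ⟨x ∘ (↑), (lift_map_apply _ _ _).symm⟩
  let y' : α → G := fun a => if ha : a ∈ s then y ⟨a, ha⟩ else 1
  refine ⟨y', fun a => ?_, ?_⟩
  · unfold y'
    split_ifs
    exacts [hyH _, one_mem H]
  · rw [lift_map_apply, ← hy, show y' ∘ (↑) = y from funext fun a => by simp [y']]

end VerballyClosed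

def verbalSubgroup {ι : Type} (V : Set (FreeGroup ι)) (G : Type*) [Group G] : Subgroup G :=
  Subgroup.closure {g : G | ∃ w ∈ V, ∃ x : ι → G, lift x w = g}

section Verbal

variable {ι : Type} {G : Type*} [Group G]

/-- For normal `K`, the values in `G` of the laws of `G ⧸ K`. -/
def Subgroup.lawValues (K : Subgroup G) : Subgroup G where
  carrier := {g | ∃ (α : Type) (u : FreeGroup α) (z : α → G),
    lift z u = g ∧ ∀ y : α → G, lift y u ∈ K}
  one_mem' := ⟨Empty, 1, Empty.elim, map_one _, fun _ => by simp [one_mem]⟩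
  mul_mem' := by
    rintro _ _ ⟨α, u, z, rfl, hu⟩ ⟨β, v, t, rfl, hv⟩
    refine ⟨α ⊕ β, FreeGroup.map Sum.inl u * FreeGroup.map Sum.inr v, Sum.elim z t, ?_,
      fun y => ?_⟩
    · simp only [map_mul, lift_map_apply, Sum.elim_comp_inl, Sum.elim_comp_inr]
    · rw [map_mul, lift_map_apply, lift_map_apply]
      exact mul_mem (hu _) (hv _)
  inv_mem' := by
    rintro _ ⟨α, u, z, rfl, hu⟩
    exact ⟨α, u⁻¹, z, map_inv _ _, fun y => by simpa using inv_mem (hu y)⟩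

theorem verbalSubgroup_le_lawValues (V : Set (FreeGroup ι)) :
    verbalSubgroup V G ≤ (verbalSubgroup V G).lawValues :=
  Subgroup.closure_le _ |>.2 fun _ ⟨w, hw, x, hx⟩ =>
    ⟨ι, w, x, hx, fun y => Subgroup.subset_closure ⟨w, hw, y, rfl⟩⟩

end Verbal

/-- If the kernel of an epimorphism is a verbal subgroup, images of verbally closed
subgroups are verbally closed. -/
theorem verballyClosed_map {G Gbar : Type*} [Group G] [Group Gbar] (φ : G →* Gbar)
    (hsurj : Function.Surjective φ) (V : Set (FreeGroup ℕ))
    (hker : φ.ker = Subgroup.closure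
      {g : G | ∃ w ∈ V, ∃ x : ℕ → G, FreeGroup.lift x w = g})
    (H : Subgroup G) (hvc : VerballyClosed H) :
    VerballyClosed (H.map φ) := by
  rintro n w _ ⟨h, hhH, rfl⟩ ⟨xbar, hxbar⟩
  choose x hx using fun i => hsurj (xbar i)
  have hker_mem : lift x w * h⁻¹ ∈ verbalSubgroup V G := by
    rw [verbalSubgroup, ← hker, MonoidHom.mem_ker, map_mul, map_inv, φ.map_freeGroupLift,
      show φ ∘ x = xbar from funext hx, hxbar, mul_inv_cancel]
  obtain ⟨α, u, z, huz, hu⟩ := verbalSubgroup_le_lawValues V hker_mem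
  obtain ⟨y, hyH, hy⟩ :=
    hvc.exists_solution ((FreeGroup.map Sum.inl u)⁻¹ * FreeGroup.map Sum.inr w) hhH
      ⟨Sum.elim z x, by simp [lift_map_apply, huz]⟩
  have hu_y : φ (lift (y ∘ Sum.inl) u) = 1 := by
    rw [← MonoidHom.mem_ker, hker]
    exact hu _
  refine ⟨φ ∘ y ∘ Sum.inr, fun i => Subgroup.mem_map_of_mem φ (hyH _), ?_⟩
  rw [← φ.map_freeGroupLift, ← hy, map_mul, map_inv, lift_map_apply, lift_map_apply, map_mul,
    map_inv, hu_y, inv_one, one_mul]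
end

section
/- The subgroup Ĥ = ⟨a⟩₂ * ⟨b⟩₂ of the group Ĝ = ⟨a, b, c | a², b², c², [a, b^c]⟩ is not verbally closed: the equation (x³[x,y^z]y³)²[x,y^z]³ = (ab)² has the solution x = a, y = b, z = c in Ĝ but no solution in Ĥ. -/
open scoped commutatorElement

/-- Relations of the group `Ĝ = ⟨a, b, c ∣ a², b², c², [a, b^c]⟩`. -/
def rels7 : Set (FreeGroup (Fin 3)) :=
  {(FreeGroup.of 0) ^ 2, (FreeGroup.of 1) ^ 2, (FreeGroup.of 2) ^ 2,
    ⁅(FreeGroup.of 0 : FreeGroup (Fin 3)), FreeGroup.of 2 * FreeGroup.of 1 * (FreeGroup.of 2)⁻¹⁆}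

/-- The group `Ĝ = ⟨a, b, c ∣ a², b², c², [a, b^c]⟩`. -/
abbrev Ghat7 : Type := PresentedGroup rels7

def a7 : Ghat7 := PresentedGroup.of 0
def b7 : Ghat7 := PresentedGroup.of 1
def c7 : Ghat7 := PresentedGroup.of 2

/-- The subgroup `Ĥ = ⟨a⟩₂ * ⟨b⟩₂` of `Ĝ`. -/
def Hhat7 : Subgroup Ghat7 := Subgroup.closure {a7, b7}

/-- The left-hand side `(x³[x,y^z]y³)²[x,y^z]³` of equation (2). -/
def lhs7 (x y z : Ghat7) : Ghat7 :=
  (x ^ 3 * (x * (z * y * z⁻¹) * x⁻¹ * (z * y * z⁻¹)⁻¹) * y ^ 3) ^ 2 *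
    (x * (z * y * z⁻¹) * x⁻¹ * (z * y * z⁻¹)⁻¹) ^ 3

/-!
Send `Ĝ` to the infinite dihedral group `D∞ = DihedralGroup 0` by `a ↦ sr 0`, `b ↦ sr 2`,
`c ↦ sr 1`; the relations hold because `sr 1` conjugates `sr 2` to `sr 0`. The image of `Ĥ` lies
in the copy of `D∞` obtained by doubling all indices, where `(ab)²` becomes `r 2`. But in every
dihedral group the word `(x³[x,y^z]y³)²[x,y^z]³` evaluates to a rotation `r (6m)` or `r (4m)`,
and `2` is neither in `6ℤ` nor in `4ℤ`.
-/

def eqnWord {G : Type*} [Group G] (x y z : G) : G :=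
  (x ^ 3 * ⁅x, z * y * z⁻¹⁆ * y ^ 3) ^ 2 * ⁅x, z * y * z⁻¹⁆ ^ 3

theorem lhs7_eq_eqnWord : lhs7 = eqnWord := rfl

theorem map_eqnWord {G H : Type*} [Group G] [Group H] (f : G →* H) (x y z : G) :
    f (eqnWord x y z) = eqnWord (f x) (f y) (f z) := by
  simp only [eqnWord, map_mul, map_pow, map_commutatorElement, map_inv]

theorem eqnWord_eq_mul_sq {G : Type*} [Group G] {x y z : G} (hx : x ^ 2 = 1) (hy : y ^ 2 = 1)
    (hxy : ⁅x, z * y * z⁻¹⁆ = 1) : eqnWord x y z = (x * y) ^ 2 := by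
  rw [eqnWord, hxy, pow_succ x, hx, pow_succ y, hy, one_pow, one_mul, one_mul, mul_one, mul_one]

namespace DihedralGroup

variable {n : ℕ}

theorem exists_eqnWord_eq_r (x y z : DihedralGroup n) :
    ∃ m, eqnWord x y z = r (6 * m) ∨ eqnWord x y z = r (4 * m) := by
  rcases x with i | i <;> rcases y with j | j <;> rcases z with k | k <;>
    simp only [eqnWord, commutatorElement_def, pow_succ, pow_zero, one_mul, r_mul_r, r_mul_sr,
      sr_mul_r, sr_mul_sr, inv_r, inv_sr]
  · exact ⟨i + j, .inl (congrArg r (by ring))⟩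
  · exact ⟨i + j, .inl (congrArg r (by ring))⟩
  · exact ⟨i, .inl (congrArg r (by ring))⟩
  · exact ⟨i, .inl (congrArg r (by ring))⟩
  · exact ⟨-j, .inl (congrArg r (by ring))⟩
  · exact ⟨j, .inl (congrArg r (by ring))⟩
  · exact ⟨j - i - k, .inr (congrArg r (by ring))⟩
  · exact ⟨k - i, .inr (congrArg r (by ring))⟩

theorem eqnWord_ne_r_two (x y z : DihedralGroup 0) : eqnWord x y z ≠ r 2 := by
  obtain ⟨m, h | h⟩ := exists_eqnWord_eq_r x y z <;> rw [h, Ne, r.injEq] <;>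
    change ¬ (_ : ℤ) = 2 <;> omega

def scale (k : ZMod n) : DihedralGroup n →* DihedralGroup n where
  toFun
    | r i => r (k * i)
    | sr i => sr (k * i)
  map_one' := congrArg r (mul_zero k)
  map_mul' := by rintro (i | i) (j | j) <;> simp [mul_add, mul_sub]

theorem scale_r (k i : ZMod n) : scale k (r i) = r (k * i) := rfl

theorem scale_sr (k i : ZMod n) : scale k (sr i) = sr (k * i) := rfl

theorem scale_injective {k : ZMod n} (hk : IsLeftRegular k) : Function.Injective (scale k) := by
  rintro (i | i) (j | j) h <;>
    simp only [scale_r, scale_sr, r.injEq, sr.injEq, reduceCtorEq] at h ⊢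
  all_goals exact hk h

end DihedralGroup

open DihedralGroup

theorem a7_sq : a7 ^ 2 = 1 := by
  rw [a7, PresentedGroup.of, ← map_pow]
  exact PresentedGroup.one_of_mem (by simp [rels7])

theorem b7_sq : b7 ^ 2 = 1 := by
  rw [b7, PresentedGroup.of, ← map_pow]
  exact PresentedGroup.one_of_mem (by simp [rels7])

theorem commutator_a7_conj_b7 : ⁅a7, c7 * b7 * c7⁻¹⁆ = 1 := by
  simp only [a7, b7, c7, PresentedGroup.of, ← map_mul, ← map_inv, ← map_commutatorElement]
  exact PresentedGroup.one_of_mem (by simp [rels7])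

def toDihedral : Ghat7 →* DihedralGroup 0 :=
  PresentedGroup.toGroup (f := ![sr 0, sr 2, sr 1]) <| by
    have hconj : (sr 1 * sr 2 * (sr 1)⁻¹ : DihedralGroup 0) = sr 0 := by
      rw [inv_sr, sr_mul_sr, r_mul_sr]; rfl
    rintro w (rfl | rfl | rfl | rfl) <;>
      simp only [map_commutatorElement, map_mul, map_inv, FreeGroup.lift_apply_of,
        Matrix.cons_val, sq, sr_mul_self, hconj, commutatorElement_self]

theorem toDihedral_a7 : toDihedral a7 = sr 0 := PresentedGroup.toGroup.of _
theorem toDihedral_b7 : toDihedral b7 = sr 2 := PresentedGroup.toGroup.of _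

theorem map_Hhat7_le_range_scale : Hhat7.map toDihedral ≤ (scale 2).range := by
  rw [Hhat7, MonoidHom.map_closure, Set.image_pair, toDihedral_a7, toDihedral_b7,
    Subgroup.closure_le]
  rintro g (rfl | rfl)
  · exact ⟨sr 0, rfl⟩
  · exact ⟨sr 1, rfl⟩

/-- The subgroup `Ĥ = ⟨a⟩₂ * ⟨b⟩₂` of `Ĝ = ⟨a, b, c ∣ a², b², c², [a, b^c]⟩` is not
verbally closed: the equation `(x³[x,y^z]y³)²[x,y^z]³ = (ab)²` has the solution
`x = a, y = b, z = c` in `Ĝ` but no solution in `Ĥ`. -/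
theorem Hhat7_not_verballyClosed :
    lhs7 a7 b7 c7 = (a7 * b7) ^ 2 ∧
    ¬ ∃ x y z : Ghat7, x ∈ Hhat7 ∧ y ∈ Hhat7 ∧ z ∈ Hhat7 ∧
        lhs7 x y z = (a7 * b7) ^ 2 := by
  refine ⟨eqnWord_eq_mul_sq a7_sq b7_sq commutator_a7_conj_b7, ?_⟩
  rintro ⟨x, y, z, hx, hy, hz, hxyz⟩
  obtain ⟨x', hx'⟩ := map_Hhat7_le_range_scale ⟨x, hx, rfl⟩
  obtain ⟨y', hy'⟩ := map_Hhat7_le_range_scale ⟨y, hy, rfl⟩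
  obtain ⟨z', hz'⟩ := map_Hhat7_le_range_scale ⟨z, hz, rfl⟩
  apply eqnWord_ne_r_two x' y' z'
  apply scale_injective (IsLeftCancelMulZero.mul_left_cancel_of_ne_zero two_ne_zero)
  rw [map_eqnWord, hx', hy', hz', ← map_eqnWord, ← lhs7_eq_eqnWord, hxyz, map_pow, map_mul,
    toDihedral_a7, toDihedral_b7]
  rfl
end

section
/- Every automorphism of a tree (a connected acyclic graph) either fixes some vertex, or fixes the midpoint of some edge, or has an invariant line (a bi-infinite geodesic) along which it acts by a nontrivial translation; moreover, if the automorphism inverts no edge and fixes no vertex, then the invariant line is unique. -/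
/-!
In a tree a walk that never immediately retraces its last edge is a geodesic.

If `f` fixes no vertex and inverts no edge, pick a vertex `v` of minimal displacement `n` and a
geodesic from `v` to `f v`. Its images under the powers of `f` glue to a bi-infinite
non-backtracking walk, hence a line translated by `n`: a backtrack at `f v` would either produce
a vertex of displacement `n - 2` or (for `n = 1`) an inverted edge.

Conversely, if `f` translates a line by `d ≠ 0` and `v` is at distance `k` from it, the geodesic
from `v` to the line, a segment of the line, and the image under `f` of the geodesic form a
non-backtracking walk from `v` to `f v`, so `v` is moved by exactly `2 k + |d|`. The line is
therefore the set of vertices of minimal displacement, which does not depend on the line.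
-/

/-- A line in a graph: a bi-infinite geodesic, given by an injective map `ℤ → V`
with consecutive vertices adjacent. -/
def IsGraphLine {V : Type*} (G : SimpleGraph V) (c : ℤ → V) : Prop :=
  Function.Injective c ∧ ∀ n : ℤ, G.Adj (c n) (c (n + 1))

/-- A line invariant under an automorphism `f`, along which `f` acts by a
nontrivial translation. -/
def IsInvariantLine {V : Type*} (G : SimpleGraph V) (f : G ≃g G) (c : ℤ → V) : Prop :=
  IsGraphLine G c ∧ ∃ d : ℤ, d ≠ 0 ∧ ∀ n : ℤ, f (c n) = c (n + d)

namespace SimpleGraph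

variable {V : Type*} {G : SimpleGraph V}

lemma Walk.dist_le_length_of_mem_support {u v x : V} (p : G.Walk u v) (hx : x ∈ p.support) :
    G.dist u x ≤ p.length := by
  classical
  exact (dist_le (p.takeUntil x hx)).trans (p.length_takeUntil_le_length hx)

lemma IsTree.length_eq_dist_of_isPath (hT : G.IsTree) {u v : V} {p : G.Walk u v}
    (hp : p.IsPath) : p.length = G.dist u v := by
  obtain ⟨q, hq, hlen⟩ := hT.connected.exists_path_of_dist u v
  rw [(hT.existsUnique_path u v).unique hp hq, hlen]

lemma IsTree.dist_eq_add_one_or_of_adj (hT : G.IsTree) (a : V) {x y : V} (hxy : G.Adj x y) :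
    G.dist a y = G.dist a x + 1 ∨ G.dist a x = G.dist a y + 1 := by
  obtain ⟨p, hp, hpx⟩ := hT.connected.exists_path_of_dist a x
  obtain ⟨q, hq, hqy⟩ := hT.connected.exists_path_of_dist a y
  by_cases hy : y ∈ p.support
  · have hx := hT.isAcyclic.ne_mem_support_of_support_of_adj_of_isPath hp hq hxy hy
    have := hT.length_eq_dist_of_isPath (hq.concat hx hxy.symm)
    rw [Walk.length_concat] at this
    omega
  · have := hT.length_eq_dist_of_isPath (hp.concat hy hxy)
    rw [Walk.length_concat] at this
    omega

lemma IsTree.eq_of_adj_of_dist_lt (hT : G.IsTree) {a x z₁ z₂ : V} (h₁ : G.Adj z₁ x)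
    (h₂ : G.Adj z₂ x) (hd₁ : G.dist a z₁ < G.dist a x) (hd₂ : G.dist a z₂ < G.dist a x) :
    z₁ = z₂ := by
  obtain ⟨q, hq, -⟩ := hT.connected.exists_path_of_dist a x
  have eq_penultimate : ∀ z, G.Adj z x → G.dist a z < G.dist a x → z = q.penultimate := by
    intro z hz hdz
    obtain ⟨p, hp, hpz⟩ := hT.connected.exists_path_of_dist a z
    have hx : x ∉ p.support := fun hx => by
      have := p.dist_le_length_of_mem_support hx
      omega
    exact hT.isAcyclic.eq_penultimate_of_adj_end hq hz.symm
      (hT.isAcyclic.mem_support_of_ne_mem_support_of_adj_of_isPath hq hp hz.symm hx)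
  rw [eq_penultimate z₁ h₁ hd₁, eq_penultimate z₂ h₂ hd₂]

def IsNonbacktracking (G : SimpleGraph V) (g : ℕ → V) (N : ℕ) : Prop :=
  (∀ j < N, G.Adj (g j) (g (j + 1))) ∧ ∀ j, j + 2 ≤ N → g (j + 2) ≠ g j

def seqAppend (g : ℕ → V) (N : ℕ) (h : ℕ → V) : ℕ → V :=
  fun j => if j ≤ N then g j else h (j - N)

section seqAppend

variable {g h : ℕ → V} {N M : ℕ}

lemma seqAppend_of_le (hM : M ≤ N) : seqAppend g N h M = g M := if_pos hM

lemma seqAppend_add (hgh : g N = h 0) (j : ℕ) : seqAppend g N h (N + j) = h j := by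
  rcases j.eq_zero_or_pos with rfl | hj
  · exact (seqAppend_of_le le_rfl).trans hgh
  · simp only [seqAppend, if_neg (show ¬N + j ≤ N by omega), Nat.add_sub_cancel_left]

end seqAppend

namespace IsNonbacktracking

variable {g h : ℕ → V} {N M : ℕ}

lemma mono (hg : G.IsNonbacktracking g N) (hMN : M ≤ N) : G.IsNonbacktracking g M :=
  ⟨fun j hj => hg.1 j (by omega), fun j hj => hg.2 j (by omega)⟩

lemma shift (hg : G.IsNonbacktracking g (M + N)) :
    G.IsNonbacktracking (fun j => g (M + j)) N :=
  ⟨fun j hj => hg.1 (M + j) (by omega), fun j hj => hg.2 (M + j) (by omega)⟩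

lemma seqAppend (hg : G.IsNonbacktracking g N) (hh : G.IsNonbacktracking h M)
    (hgh : g N = h 0) (hturn : 0 < N → 0 < M → g (N - 1) ≠ h 1) :
    G.IsNonbacktracking (seqAppend g N h) (N + M) := by
  refine ⟨fun j hj => ?_, fun j hj => ?_⟩
  · rcases lt_or_ge j N with hjN | hjN
    · rw [seqAppend_of_le hjN.le, seqAppend_of_le hjN]
      exact hg.1 j hjN
    · obtain ⟨i, rfl⟩ := Nat.exists_eq_add_of_le hjN
      rw [seqAppend_add hgh, add_assoc, seqAppend_add hgh]
      exact hh.1 i (by omega)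
  · rcases le_or_gt (j + 2) N with hjN | hjN
    · rw [seqAppend_of_le hjN, seqAppend_of_le (by omega)]
      exact hg.2 j hjN
    rcases le_or_gt N j with hNj | hjN'
    · obtain ⟨i, rfl⟩ := Nat.exists_eq_add_of_le hNj
      rw [seqAppend_add hgh, add_assoc, seqAppend_add hgh]
      exact hh.2 i (by omega)
    · obtain rfl : j = N - 1 := by omega
      rw [show N - 1 + 2 = N + 1 by omega, seqAppend_add hgh, seqAppend_of_le (by omega)]
      exact (hturn (by omega) (by omega)).symm

lemma exists_periodic_extension (hg : G.IsNonbacktracking g N) (f : G ≃g G) (hN : 0 < N)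
    (hgN : g N = f (g 0)) (hturn : f (g 1) ≠ g (N - 1)) :
    ∃ c : ℤ → V, (∀ t, G.Adj (c t) (c (t + 1))) ∧ (∀ t, c (t + 2) ≠ c t) ∧
      ∀ t, f (c t) = c (t + N) := by
  set c : ℤ → V := fun t => (f ^ (t / N)) (g (t % N).toNat)
  have hper : ∀ t, c (t + N) = f (c t) := fun t => by
    simp only [c, Int.add_ediv_of_dvd_right (dvd_refl (N : ℤ)),
      Int.ediv_self (by omega : (N : ℤ) ≠ 0), ← Int.emod_eq_add_self_emod, add_comm _ (1 : ℤ),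
      zpow_one_add, RelIso.mul_apply]
  have hbase : ∀ j ≤ N, c j = g j := fun j hj => by
    rcases hj.lt_or_eq with hj | rfl
    · simp [c, Int.ediv_eq_zero_of_lt (Nat.cast_nonneg j) (by omega : (j : ℤ) < N),
        Int.emod_eq_of_lt (Nat.cast_nonneg j) (by omega : (j : ℤ) < N)]
    · simpa [hgN, c] using hper 0
  have hperiodic : ∀ P : ℤ → Prop, Function.Periodic P N → (∀ j < N, P j) → ∀ t, P t :=
    fun P hP h t => by
      obtain ⟨y, ⟨hy₀, hyN⟩, hPy⟩ := hP.exists_mem_Ico₀ (by omega) t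
      rw [hPy, show y = (y.toNat : ℤ) by omega]
      exact h _ (by omega)
  refine ⟨c, hperiodic _ (fun t => ?_) (fun j hj => ?_),
    hperiodic _ (fun t => ?_) (fun j hj => ?_), fun t => (hper t).symm⟩
  · show G.Adj (c (t + N)) (c (t + N + 1)) = G.Adj (c t) (c (t + 1))
    rw [add_right_comm, hper, hper, f.map_adj_iff]
  · rw [hbase j hj.le, show (j : ℤ) + 1 = (j + 1 : ℕ) by push_cast; rfl, hbase (j + 1) hj]
    exact hg.1 j hj
  · show (c (t + N + 2) ≠ c (t + N)) = (c (t + 2) ≠ c t)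
    rw [add_right_comm, hper, hper, f.injective.ne_iff]
  · rcases le_or_gt (j + 2) N with hj₂ | hj₂
    · rw [hbase j hj.le, show (j : ℤ) + 2 = (j + 2 : ℕ) by push_cast; rfl, hbase (j + 2) hj₂]
      exact hg.2 j hj₂
    · obtain rfl : j = N - 1 := by omega
      rw [hbase _ hj.le, show ((N - 1 : ℕ) : ℤ) + 2 = 1 + N by omega, hper,
        show (1 : ℤ) = (1 : ℕ) from rfl, hbase 1 hN]
      exact hturn

end IsNonbacktracking

lemma Walk.IsPath.isNonbacktracking {u v : V} {p : G.Walk u v} (hp : p.IsPath) :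
    G.IsNonbacktracking p.getVert p.length :=
  ⟨fun _ hj => p.adj_getVert_succ hj, fun j hj h => by
    have := hp.getVert_injOn (by simp only [Set.mem_ofPred_eq]; omega)
      (by simp only [Set.mem_ofPred_eq]; omega) h
    omega⟩

theorem IsTree.dist_eq_of_isNonbacktracking (hT : G.IsTree) {g : ℕ → V} {N : ℕ}
    (hg : G.IsNonbacktracking g N) : G.dist (g 0) (g N) = N := by
  induction N using Nat.strong_induction_on with
  | _ N ih =>
    rcases N with _ | _ | K
    · simp
    · simpa using hg.1 0 one_pos
    show G.dist (g 0) (g (K + 2)) = K + 2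
    have hK := ih K (by omega) (hg.mono (by omega))
    have hK₁ := ih (K + 1) (by omega) (hg.mono (by omega))
    have hadj : G.Adj (g (K + 1)) (g (K + 2)) := hg.1 (K + 1) (by omega)
    rcases hT.dist_eq_add_one_or_of_adj (g 0) hadj with h | h
    · omega
    exact absurd (hT.eq_of_adj_of_dist_lt (a := g 0) hadj.symm (hg.1 K (by omega)) (by omega)
      (by omega)) (hg.2 K le_rfl)

lemma isNonbacktracking_of_forall {c : ℤ → V} (hadj : ∀ t, G.Adj (c t) (c (t + 1)))
    (hnb : ∀ t, c (t + 2) ≠ c t) (m : ℤ) (N : ℕ) :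
    G.IsNonbacktracking (fun j : ℕ => c (m + j)) N :=
  ⟨fun j _ => by simpa [add_assoc] using hadj (m + j),
    fun j _ => by simpa [add_assoc] using hnb (m + j)⟩

lemma IsTree.dist_eq_natAbs_of_forall (hT : G.IsTree) {c : ℤ → V}
    (hadj : ∀ t, G.Adj (c t) (c (t + 1))) (hnb : ∀ t, c (t + 2) ≠ c t) (i j : ℤ) :
    G.dist (c i) (c j) = (j - i).natAbs := by
  wlog hij : i ≤ j generalizing i j
  · rw [G.dist_comm, this j i (by omega)]
    omega
  have := hT.dist_eq_of_isNonbacktracking (isNonbacktracking_of_forall hadj hnb i (j - i).toNat)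
  simp only [Nat.cast_zero, add_zero, show i + ((j - i).toNat : ℤ) = j by omega] at this
  omega

lemma IsTree.isGraphLine_of_forall (hT : G.IsTree) {c : ℤ → V}
    (hadj : ∀ t, G.Adj (c t) (c (t + 1))) (hnb : ∀ t, c (t + 2) ≠ c t) : IsGraphLine G c :=
  ⟨fun i j hij => by
    have := hT.dist_eq_natAbs_of_forall hadj hnb i j
    rw [hij, G.dist_self] at this
    omega, hadj⟩

lemma _root_.IsGraphLine.add_two_ne {c : ℤ → V} (hc : IsGraphLine G c) (t : ℤ) :
    c (t + 2) ≠ c t :=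
  fun h => by simpa using hc.1 h

lemma _root_.IsGraphLine.comp_neg {c : ℤ → V} (hc : IsGraphLine G c) :
    IsGraphLine G (fun n => c (-n)) :=
  ⟨hc.1.comp neg_injective, fun n => by
    simpa [show -(n + 1) = -n - 1 by ring] using (hc.2 (-n - 1)).symm⟩

theorem IsTree.dist_apply_eq_of_translate (hT : G.IsTree) (f : G ≃g G) {c : ℤ → V}
    (hc : IsGraphLine G c) {d : ℕ} (hd : 0 < d) (htr : ∀ n, f (c n) = c (n + d)) {v : V}
    {m₀ : ℤ} (hm₀ : ∀ m, G.dist v (c m₀) ≤ G.dist v (c m)) :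
    G.dist v (f v) = 2 * G.dist v (c m₀) + d := by
  obtain ⟨q, hq, hqlen⟩ := hT.connected.exists_path_of_dist v (c m₀)
  set k := G.dist v (c m₀)
  have hqnb := hq.isNonbacktracking
  rw [hqlen] at hqnb
  have hqk : q.getVert k = c m₀ := by rw [← hqlen, Walk.getVert_length]
  have hoff : 0 < k → ∀ m, q.getVert (k - 1) ≠ c m := by
    intro hk m h
    have := hT.dist_eq_of_isNonbacktracking (hqnb.mono (Nat.sub_le k 1))
    rw [q.getVert_zero, h] at this
    have := hm₀ m
    omega
  have hback := (hq.reverse.map (f := f.toHom) f.injective).isNonbacktracking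
  rw [Walk.length_map, Walk.length_reverse, hqlen] at hback
  have hback_apply : ∀ j, (q.reverse.map f.toHom).getVert j = f (q.getVert (k - j)) := fun j => by
    rw [Walk.getVert_map, Walk.getVert_reverse, hqlen]
    rfl
  -- go from `v` to the line, along it to `f (c m₀)`, and back to `f v` along the image of `q`
  have hfwd := hqnb.seqAppend (isNonbacktracking_of_forall hc.2 hc.add_two_ne m₀ d)
    (by simpa using hqk) fun hk _ => hoff hk _
  have hfwd_add := seqAppend_add (h := fun j : ℕ => c (m₀ + j)) (by simpa using hqk)
  have hjoin : seqAppend q.getVert k (fun j : ℕ => c (m₀ + j)) (k + d) =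
      (q.reverse.map f.toHom).getVert 0 := by
    rw [hfwd_add, hback_apply, Nat.sub_zero, hqk, htr]
  have hwalk := hfwd.seqAppend hback hjoin fun _ hk => by
    rw [show k + d - 1 = k + (d - 1) by omega, hfwd_add, hback_apply,
      show m₀ + ((d - 1 : ℕ) : ℤ) = m₀ - 1 + d by omega, ← htr]
    exact fun h => hoff hk _ (f.injective h).symm
  have := hT.dist_eq_of_isNonbacktracking hwalk
  rwa [seqAppend_of_le (Nat.zero_le _), seqAppend_of_le (Nat.zero_le _), q.getVert_zero,
    seqAppend_add hjoin, hback_apply, Nat.sub_self, q.getVert_zero,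
    show k + d + k = 2 * k + d by ring] at this

theorem IsTree.range_eq_of_translate (hT : G.IsTree) (f : G ≃g G) {c : ℤ → V}
    (hc : IsGraphLine G c) {d : ℕ} (hd : 0 < d) (htr : ∀ n, f (c n) = c (n + d)) :
    Set.range c = {v | ∀ w, G.dist v (f v) ≤ G.dist w (f w)} := by
  have hdisp : ∀ v, ∃ m₀, G.dist v (f v) = 2 * G.dist v (c m₀) + d := fun v =>
    ⟨_, hT.dist_apply_eq_of_translate f hc hd htr
      fun m => Function.argmin_le (fun m => G.dist v (c m)) m⟩
  have hline : ∀ m, G.dist (c m) (f (c m)) = d := fun m => by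
    simpa using hT.dist_apply_eq_of_translate f hc hd htr (v := c m) (m₀ := m) fun _ => by simp
  ext v
  constructor
  · rintro ⟨m, rfl⟩ w
    obtain ⟨m₀, hw⟩ := hdisp w
    rw [hline, hw]
    omega
  · intro hv
    obtain ⟨m₀, hv'⟩ := hdisp v
    have := hv (c 0)
    rw [hline, hv'] at this
    exact ⟨m₀, ((hT.connected.dist_eq_zero_iff).1 (by omega)).symm⟩

theorem IsTree.range_eq_of_isInvariantLine (hT : G.IsTree) {f : G ≃g G} {c : ℤ → V}
    (hc : IsInvariantLine G f c) :
    Set.range c = {v | ∀ w, G.dist v (f v) ≤ G.dist w (f w)} := by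
  obtain ⟨hline, d, hd, htr⟩ := hc
  rcases hd.lt_or_gt with hneg | hpos
  · rw [← (Equiv.neg ℤ).surjective.range_comp]
    refine hT.range_eq_of_translate f hline.comp_neg (d := d.natAbs) (by omega) fun n => ?_
    show f (c (-n)) = c (-(n + d.natAbs))
    rw [htr]
    congr 1
    omega
  · exact hT.range_eq_of_translate f hline (d := d.toNat) (by omega)
      fun n => by rw [htr]; congr 1; omega

theorem IsTree.exists_isInvariantLine (hT : G.IsTree) (f : G ≃g G)
    (hfix : ∀ v, f v ≠ v) (hinv : ∀ u v, G.Adj u v → f u = v → f v ≠ u) :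
    ∃ c, IsInvariantLine G f c := by
  have : Nonempty V := hT.connected.nonempty
  set v₀ := Function.argmin fun v => G.dist v (f v)
  have hmin : ∀ v, G.dist v₀ (f v₀) ≤ G.dist v (f v) :=
    fun v => Function.argmin_le (fun v => G.dist v (f v)) v
  obtain ⟨p, hp, hplen⟩ := hT.connected.exists_path_of_dist v₀ (f v₀)
  set n := G.dist v₀ (f v₀)
  have hn : 0 < n := hT.connected.pos_dist_of_ne (hfix v₀).symm
  have hpnb := hp.isNonbacktracking
  rw [hplen] at hpnb
  have hpn : p.getVert n = f v₀ := by rw [← hplen, Walk.getVert_length]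
  have hturn : f (p.getVert 1) ≠ p.getVert (n - 1) := by
    intro h
    rcases le_or_gt n 1 with hn₁ | hn₂
    · have hn₁ : n = 1 := by omega
      rw [hn₁] at hpn h
      have hadj := hpnb.1 0 hn
      rw [zero_add, hpn, p.getVert_zero] at hadj
      rw [hpn, Nat.sub_self, p.getVert_zero] at h
      exact hinv _ _ hadj rfl h
    · have := hT.dist_eq_of_isNonbacktracking
        (hpnb.mono (show 1 + (n - 2) ≤ n by omega)).shift
      rw [add_zero, show 1 + (n - 2) = n - 1 by omega, ← h] at this
      have := hmin (p.getVert 1)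
      omega
  obtain ⟨c, hadj, hnb, htr⟩ :=
    hpnb.exists_periodic_extension f hn (by rw [hpn, p.getVert_zero]) hturn
  exact ⟨c, hT.isGraphLine_of_forall hadj hnb, n, by omega, htr⟩

end SimpleGraph

/-- Every automorphism of a tree fixes a vertex, or inverts an edge (fixing its
midpoint), or has an invariant line along which it translates nontrivially;
moreover, if it fixes no vertex and inverts no edge, the invariant line is unique. -/
theorem tree_automorphism_trichotomy {V : Type*} (G : SimpleGraph V) (hT : G.IsTree)
    (f : G ≃g G) :
    ((∃ v : V, f v = v) ∨ (∃ u v : V, G.Adj u v ∧ f u = v ∧ f v = u) ∨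
      ∃ c : ℤ → V, IsInvariantLine G f c) ∧
    ((∀ v : V, f v ≠ v) → (∀ u v : V, G.Adj u v → ¬(f u = v ∧ f v = u)) →
      ∀ c c' : ℤ → V, IsInvariantLine G f c → IsInvariantLine G f c' →
        Set.range c = Set.range c') := by
  refine ⟨?_, fun _ _ c c' hc hc' => by
    rw [hT.range_eq_of_isInvariantLine hc, hT.range_eq_of_isInvariantLine hc']⟩
  by_cases hfix : ∃ v, f v = v
  · exact Or.inl hfix
  by_cases hinv : ∃ u v, G.Adj u v ∧ f u = v ∧ f v = u
  · exact Or.inr (Or.inl hinv)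
  push Not at hfix hinv
  exact Or.inr (Or.inr (hT.exists_isInvariantLine f hfix hinv))
end

section
/- Let f be an automorphism of a tree T fixing no vertex and inverting no edge, and let m = min over vertices x of d(x, f(x)). Then for any vertex y achieving this minimum, the vertices fⁿ(y), n ∈ ℤ, all lie on a common line which is invariant under f. -/
/-!
Let `m = d(y, f y) > 0` and let `p` be a geodesic from `y` to `f y`. The concatenation
`⋯ f⁻¹p · p · fp · f²p ⋯` is a bi-infinite walk through the orbit of `y` which `f` shifts by `m`.
It cannot backtrack inside a translate of `p`, since `p` is a geodesic, nor at a junction: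
there a backtrack means `f p₁ = p_{m-1}`, so `p₁` would be displaced by only `m - 2`, or, when
`m = 1`, `f` would invert the edge `y f(y)`. In a tree a non-backtracking walk is a geodesic,
so the walk is injective: it is the required line.
-/

theorem RelIso.toEquiv_zpow {α : Type*} {r : α → α → Prop} (f : r ≃r r) (n : ℤ) :
    (f ^ n).toEquiv = f.toEquiv ^ n :=
  map_zpow (⟨⟨RelIso.toEquiv, rfl⟩, fun _ _ => rfl⟩ : (r ≃r r) →* Equiv.Perm α) f n

namespace SimpleGraph

variable {V : Type*} {G : SimpleGraph V}

lemma Walk.dist_getVert_le {u v : V} (p : G.Walk u v) {i j : ℕ} (hij : i ≤ j) :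
    G.dist (p.getVert i) (p.getVert j) ≤ j - i := by
  have h := dist_le ((p.drop i).take (j - i))
  rw [Walk.take_length, Walk.drop_getVert, Nat.add_sub_cancel' hij] at h
  exact h.trans inf_le_left

lemma IsAcyclic.eq_penultimate_of_adj_of_dist_add_one (hG : G.IsAcyclic) {u v w : V}
    {p : G.Walk u v} (hp : p.IsPath) (hadj : G.Adj v w)
    (hw : G.dist u w + 1 = G.dist u v) : w = p.penultimate := by
  classical
  obtain ⟨q, hq, hqd⟩ := (p.reachable.trans hadj.reachable).exists_path_of_dist
  have hv : v ∉ q.support := fun hv => by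
    have := (dist_le (q.takeUntil v hv)).trans (q.length_takeUntil_le_length hv)
    omega
  exact hG.eq_penultimate_of_adj_end hp hadj
    (hG.mem_support_of_ne_mem_support_of_adj_of_isPath hp hq hadj hv)

lemma IsAcyclic.eq_of_adj_of_dist_add_one (hG : G.IsAcyclic) {u v w w' : V}
    (huv : G.Reachable u v) (hw : G.Adj v w) (hw' : G.Adj v w')
    (hdw : G.dist u w + 1 = G.dist u v) (hdw' : G.dist u w' + 1 = G.dist u v) : w = w' := by
  obtain ⟨p, hp, -⟩ := huv.exists_path_of_dist
  rw [hG.eq_penultimate_of_adj_of_dist_add_one hp hw hdw,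
    hG.eq_penultimate_of_adj_of_dist_add_one hp hw' hdw']

lemma IsAcyclic.dist_eq_of_nonbacktracking (hG : G.IsAcyclic) {c : ℕ → V}
    (hadj : ∀ n, G.Adj (c n) (c (n + 1))) (hback : ∀ n, c (n + 2) ≠ c n) (k : ℕ) :
    G.dist (c 0) (c k) = k := by
  suffices ∀ k, G.dist (c 0) (c k) = k ∧ G.dist (c 0) (c (k + 1)) = k + 1 from (this k).1
  intro k
  induction k with
  | zero => exact ⟨dist_self, dist_eq_one_iff_adj.mpr (hadj 0)⟩
  | succ k ih =>
    refine ⟨ih.2, ?_⟩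
    have hreach : G.Reachable (c 0) (c (k + 1)) := Reachable.of_dist_ne_zero (by omega)
    rcases hG.dist_eq_dist_add_one_of_adj_of_reachable (c 0) (hadj (k + 1)) hreach with h | h
    · exact absurd (hG.eq_of_adj_of_dist_add_one hreach (hadj (k + 1)) (hadj k).symm
        h.symm (by omega)) (hback k)
    · omega

lemma IsAcyclic.injective_of_nonbacktracking (hG : G.IsAcyclic) {c : ℤ → V}
    (hadj : ∀ n, G.Adj (c n) (c (n + 1))) (hback : ∀ n, c (n + 2) ≠ c n) :
    Function.Injective c := by
  have hdist (n : ℤ) (k : ℕ) : G.dist (c n) (c (n + k)) = k := by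
    simpa using hG.dist_eq_of_nonbacktracking (c := fun k : ℕ => c (n + k))
      (fun k => by simpa [add_assoc] using hadj (n + k))
      (fun k => by simpa [add_assoc] using hback (n + k)) k
  intro a b hab
  wlog hlt : a ≤ b generalizing a b
  · exact (this hab.symm (by omega)).symm
  have := hdist a (b - a).toNat
  rw [Int.toNat_of_nonneg (by omega), add_sub_cancel, hab, dist_self] at this
  omega

namespace Walk

variable (f : G ≃g G) {y : V} (p : G.Walk y (f y))

/-- The bi-infinite walk `⋯ f⁻¹p · p · fp · f²p ⋯`, with `p` starting at index `0`. -/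
def concatTranslates (n : ℤ) : V :=
  (f ^ (n / p.length)) (p.getVert (n % p.length).toNat)

variable {f p}

@[simp]
lemma concatTranslates_zero : p.concatTranslates f 0 = y := by
  simp [concatTranslates]

lemma concatTranslates_natCast_of_lt {i : ℕ} (hi : i < p.length) :
    p.concatTranslates f i = p.getVert i := by
  have hi' : (i : ℤ) < p.length := by exact_mod_cast hi
  simp [concatTranslates, Int.ediv_eq_zero_of_lt (Int.natCast_nonneg i) hi',
    Int.emod_eq_of_lt (Int.natCast_nonneg i) hi']

lemma concatTranslates_add_mul (hpos : 0 < p.length) (n q : ℤ) :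
    p.concatTranslates f (n + q * p.length) = (f ^ q) (p.concatTranslates f n) := by
  simp only [concatTranslates, Int.add_mul_ediv_right _ _ (Int.natCast_ne_zero.mpr hpos.ne'),
    Int.add_mul_emod_self_right, add_comm _ q, zpow_add, RelIso.mul_apply]

lemma concatTranslates_add_length (hpos : 0 < p.length) (n : ℤ) :
    p.concatTranslates f (n + p.length) = f (p.concatTranslates f n) := by
  simpa using concatTranslates_add_mul hpos n 1

lemma concatTranslates_natCast_of_le (hpos : 0 < p.length) {i : ℕ} (hi : i ≤ p.length) :
    p.concatTranslates f i = p.getVert i := by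
  rcases hi.lt_or_eq with hi | rfl
  · exact concatTranslates_natCast_of_lt hi
  · simpa using concatTranslates_add_length hpos 0

lemma exists_concatTranslates_add_eq (hpos : 0 < p.length) (n : ℤ) :
    ∃ q : ℤ, ∃ r < p.length, ∀ j : ℤ,
      p.concatTranslates f (n + j) = (f ^ q) (p.concatTranslates f (r + j)) := by
  have hm : (0 : ℤ) < p.length := by exact_mod_cast hpos
  have := Int.emod_lt_of_pos n hm
  refine ⟨n / p.length, (n % p.length).toNat, by omega, fun j => ?_⟩
  rw [← concatTranslates_add_mul hpos, Int.toNat_of_nonneg (Int.emod_nonneg n hm.ne')]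
  congr 1
  linarith [Int.emod_add_ediv_mul n p.length]

lemma concatTranslates_adj (hpos : 0 < p.length) (n : ℤ) :
    G.Adj (p.concatTranslates f n) (p.concatTranslates f (n + 1)) := by
  obtain ⟨q, r, hr, hc⟩ := exists_concatTranslates_add_eq hpos n
  have hc0 := hc 0
  simp only [add_zero] at hc0
  rw [hc0, hc 1, (f ^ q).map_adj_iff, concatTranslates_natCast_of_lt hr, ← Nat.cast_succ,
    concatTranslates_natCast_of_le hpos hr]
  exact p.adj_getVert_succ hr

lemma concatTranslates_add_two_ne (hpath : p.IsPath) (hpos : 0 < p.length)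
    (hturn : f p.snd ≠ p.penultimate) (n : ℤ) :
    p.concatTranslates f (n + 2) ≠ p.concatTranslates f n := by
  obtain ⟨q, r, hr, hc⟩ := exists_concatTranslates_add_eq hpos n
  have hc0 := hc 0
  simp only [add_zero] at hc0
  rw [hc0, hc 2, (f ^ q).injective.ne_iff, concatTranslates_natCast_of_lt hr]
  rcases (by omega : r + 2 ≤ p.length ∨ r + 1 = p.length) with h | h
  · rw [show (r : ℤ) + 2 = (r + 2 : ℕ) by push_cast; ring, concatTranslates_natCast_of_le hpos h]
    intro heq
    have := hpath.getVert_injOn (by simp; omega) (by simp; omega) heq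
    omega
  · have h1 := concatTranslates_natCast_of_le (f := f) (i := 1) hpos hpos
    rw [Nat.cast_one] at h1
    rwa [show (r : ℤ) + 2 = 1 + p.length by omega, concatTranslates_add_length hpos, h1,
      show r = p.length - 1 by omega]

end Walk

lemma Iso.apply_snd_ne_penultimate_of_dist_le (f : G ≃g G)
    (hinv : ∀ u v : V, G.Adj u v → ¬(f u = v ∧ f v = u)) {y : V}
    (hy : ∀ x : V, G.dist y (f y) ≤ G.dist x (f x)) {p : G.Walk y (f y)}
    (hlen : p.length = G.dist y (f y)) (hpos : 0 < p.length) : f p.snd ≠ p.penultimate := by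
  intro h
  rcases (by omega : p.length = 1 ∨ 2 ≤ p.length) with h1 | h2
  · have hsnd : p.snd = f y := p.getVert_of_length_le h1.le
    have hpen : p.penultimate = y := by simp [Walk.penultimate, h1]
    have hadj : G.Adj y (f y) := by simpa [hsnd] using p.adj_getVert_succ (i := 0) hpos
    exact hinv y (f y) hadj ⟨rfl, by rw [← hsnd, h, hpen]⟩
  · have hmin : G.dist y (f y) ≤ G.dist p.snd p.penultimate := h ▸ hy p.snd
    have : G.dist p.snd p.penultimate ≤ p.length - 1 - 1 := p.dist_getVert_le (by omega)
    omega

end SimpleGraph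

open SimpleGraph

/-- Let `f` be an automorphism of a tree `T` fixing no vertex and inverting no edge,
and let `y` be a vertex minimizing `d(x, f x)`.  Then all the vertices `fⁿ y`, `n ∈ ℤ`,
lie on a common line which is invariant under `f`. -/
theorem min_displacement_on_axis {V : Type*} (G : SimpleGraph V) (hT : G.IsTree)
    (f : G ≃g G)
    (hfix : ∀ v : V, f v ≠ v)
    (hinv : ∀ u v : V, G.Adj u v → ¬(f u = v ∧ f v = u))
    (y : V) (hy : ∀ x : V, G.dist y (f y) ≤ G.dist x (f x)) :
    ∃ c : ℤ → V,
      (Function.Injective c ∧ ∀ n : ℤ, G.Adj (c n) (c (n + 1))) ∧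
      (∃ d : ℤ, d ≠ 0 ∧ ∀ n : ℤ, f (c n) = c (n + d)) ∧
      ∀ n : ℤ, (f.toEquiv ^ n) y ∈ Set.range c := by
  obtain ⟨p, hpath, hlen⟩ := hT.connected.exists_path_of_dist y (f y)
  have hpos : 0 < p.length := hlen ▸ hT.connected.pos_dist_of_ne (hfix y).symm
  have hturn := Iso.apply_snd_ne_penultimate_of_dist_le f hinv hy hlen hpos
  refine ⟨p.concatTranslates f, ⟨?_, Walk.concatTranslates_adj hpos⟩,
    ⟨p.length, by omega, fun n => (Walk.concatTranslates_add_length hpos n).symm⟩,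
    fun n => ⟨n * p.length, ?_⟩⟩
  · exact hT.isAcyclic.injective_of_nonbacktracking (Walk.concatTranslates_adj hpos)
      (Walk.concatTranslates_add_two_ne hpath hpos hturn)
  · simpa [← RelIso.toEquiv_zpow] using Walk.concatTranslates_add_mul hpos 0 n
end

section
/- Let F₁ = ⟨f⟩ be an infinite cyclic subgroup of a free product G = G₁ * ⋯ * Gₙ of n ≥ 1 finite groups each of order > 1. Then F₁ is not verbally closed in G. Specifically, writing f = s₁s₂⋯sₘ as a product of elements of the finite free factors and choosing a prime p larger than all the orders #Gᵢ, the equation x₁^p x₂^p ⋯ xₘ^p = f has a solution in G but its left-hand side evaluated on powers of f is always a p-th power of a power of f, hence never equals f. -/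
/-!
Choose a prime `p` coprime to every `#Gᵢ`. Then every element of each `Gᵢ` is a `p`-th
power, so writing `f` as a product of such letters gives `f = b₁ᵖ ⋯ bₘᵖ`: the equation
`x₁ᵖ ⋯ xₘᵖ = f` is solvable in the free product. Any solution inside `⟨f⟩` takes values
in `⟨fᵖ⟩`, which does not contain `f` because `f` has infinite order.
-/

theorem Nat.exists_prime_forall_coprime {ι : Type*} [Fintype ι] (n : ι → ℕ)
    (hn : ∀ i, n i ≠ 0) : ∃ p, p.Prime ∧ ∀ i, (n i).Coprime p := by
  have hN : 0 < ∏ i, n i := Nat.pos_of_ne_zero (Finset.prod_ne_zero_iff.2 fun i _ => hn i)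
  obtain ⟨p, hNp, hp⟩ := Nat.exists_infinite_primes ((∏ i, n i) + 1)
  have hprod : (∏ i, n i).Coprime p :=
    (hp.coprime_iff_not_dvd.2 fun hdvd => by have := Nat.le_of_dvd hN hdvd; omega).symm
  exact ⟨p, hp, fun i => hprod.coprime_dvd_left (Finset.dvd_prod_of_mem n (Finset.mem_univ i))⟩

namespace FreeGroup

def powProd (p m : ℕ) : FreeGroup (Fin m) :=
  (List.ofFn fun j => of j ^ p).prod

variable {M : Type*} [Group M] {p : ℕ}

theorem lift_powProd (m : ℕ) (x : Fin m → M) :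
    lift x (powProd p m) = (List.ofFn fun j => x j ^ p).prod := by
  simp [powProd, map_list_prod, List.map_ofFn, Function.comp_def]

theorem exists_lift_powProd_eq_of_mem_closure {g : M}
    (hg : g ∈ Submonoid.closure {a | ∃ b, b ^ p = a}) :
    ∃ m, ∃ x : Fin m → M, lift x (powProd p m) = g := by
  obtain ⟨l, hl, rfl⟩ := Submonoid.exists_list_of_mem_closure hg
  choose b hb using fun j : Fin l.length => hl (l.get j) (l.get_mem j)
  refine ⟨l.length, b, ?_⟩
  rw [lift_powProd]
  congr 1
  exact List.ext_get (by simp) (by simp [hb])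

theorem lift_powProd_mem_zpowers_pow {f : M} {m : ℕ} {x : Fin m → M}
    (hx : ∀ j, x j ∈ Subgroup.zpowers f) :
    lift x (powProd p m) ∈ Subgroup.zpowers (f ^ p) := by
  rw [lift_powProd]
  refine Subgroup.list_prod_mem _ fun a ha => ?_
  obtain ⟨j, rfl⟩ := List.mem_ofFn.1 ha
  obtain ⟨k, hk⟩ := Subgroup.mem_zpowers_iff.1 (hx j)
  refine ⟨k, show (f ^ p) ^ k = _ from ?_⟩
  rw [← hk, ← zpow_natCast, ← zpow_natCast, ← zpow_mul, ← zpow_mul, mul_comm]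

end FreeGroup

theorem eq_one_of_self_mem_zpowers_pow {M : Type*} [Group M] {f : M} (hf : ¬IsOfFinOrder f)
    {n : ℕ} (h : f ∈ Subgroup.zpowers (f ^ n)) : n = 1 := by
  obtain ⟨k, hk⟩ := Subgroup.mem_zpowers_iff.1 h
  have hnk : (n : ℤ) * k = 1 :=
    injective_zpow_iff_not_isOfFinOrder.2 hf (by simp only [zpow_mul, zpow_natCast, hk, zpow_one])
  exact_mod_cast Int.eq_one_of_mul_eq_one_right (Int.natCast_nonneg n) hnk

theorem Monoid.CoprodI.closure_pow_eq_top {ι : Type*} {G : ι → Type*} [∀ i, Group (G i)]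
    {p : ℕ} (hp : ∀ i, (Nat.card (G i)).Coprime p) :
    Submonoid.closure {a : CoprodI G | ∃ b, b ^ p = a} = ⊤ := by
  rw [eq_top_iff, ← mclosure_iUnion_range_of]
  refine Submonoid.closure_mono (Set.iUnion_subset fun i => ?_)
  rintro _ ⟨g, rfl⟩
  obtain ⟨h, rfl⟩ := (powCoprime (hp i)).surjective g
  exact ⟨of h, (map_pow of h p).symm⟩

theorem zpowers_not_verballyClosed_general {ι : Type*} [Fintype ι]
    (G : ι → Type*) [∀ i, Group (G i)] [∀ i, Finite (G i)]
    (f : Monoid.CoprodI G) (hf : ¬ IsOfFinOrder f) :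
    ¬ VerballyClosed (Subgroup.zpowers f) := by
  intro hvc
  obtain ⟨p, hp, hcop⟩ :=
    Nat.exists_prime_forall_coprime (fun i => Nat.card (G i)) fun _ => Nat.card_pos.ne'
  obtain ⟨m, x, hx⟩ := FreeGroup.exists_lift_powProd_eq_of_mem_closure
    ((Monoid.CoprodI.closure_pow_eq_top hcop).symm ▸ Submonoid.mem_top f)
  obtain ⟨y, hyf, hy⟩ :=
    hvc m (FreeGroup.powProd p m) f (Subgroup.mem_zpowers f) ⟨x, hx⟩
  have hf_mem : f ∈ Subgroup.zpowers (f ^ p) := by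
    simpa only [hy] using FreeGroup.lift_powProd_mem_zpowers_pow (p := p) hyf
  exact hp.one_lt.ne' (eq_one_of_self_mem_zpowers_pow hf hf_mem)

/-- An infinite cyclic subgroup of a free product of finitely many nontrivial finite
groups is not verbally closed. -/
theorem zpowers_not_verballyClosed {ι : Type*} [Fintype ι] [Nonempty ι]
    (G : ι → Type*) [∀ i, Group (G i)] [∀ i, Finite (G i)] [∀ i, Nontrivial (G i)]
    (f : Monoid.CoprodI G) (hf : ¬ IsOfFinOrder f) :
    ¬ VerballyClosed (Subgroup.zpowers f) :=
  zpowers_not_verballyClosed_general G f hf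
end

section
/- No nontrivial free subgroup of a free product of finitely many nontrivial finite groups is verbally closed: if F_r is a free subgroup of rank r ≥ 1 of G = G₁ * ⋯ * Gₙ with 1 < #Gᵢ < ∞, then F_r is not verbally closed in G. -/
def powProdWord (n k : ℕ) : FreeGroup (Fin k) :=
  (List.ofFn fun j => FreeGroup.of j ^ n).prod

@[simp]
theorem lift_powProdWord {K : Type*} [Group K] {n k : ℕ} (x : Fin k → K) :
    FreeGroup.lift x (powProdWord n k) = (List.ofFn fun j => x j ^ n).prod := by
  simp [powProdWord, map_list_prod, List.map_ofFn, Function.comp_def]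

theorem VerballyClosed.exists_ofFn_pow_prod_eq {K : Type*} [Group K] {H : Subgroup K}
    (hH : VerballyClosed H) {n k : ℕ} (h : H) (x : Fin k → K)
    (hx : (List.ofFn fun j => x j ^ n).prod = h) :
    ∃ y : Fin k → H, (List.ofFn fun j => y j ^ n).prod = h := by
  obtain ⟨z, hzH, hz⟩ := hH k (powProdWord n k) h h.2 ⟨x, by rwa [lift_powProdWord]⟩
  refine ⟨fun j => ⟨z j, hzH j⟩, Subtype.ext ?_⟩
  simpa [Subgroup.val_list_prod, List.map_ofFn, Function.comp_def] using hz

theorem exists_pow_eq_self_of_finite {ι : Type*} [Finite ι] (M : ι → Type*)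
    [∀ i, LeftCancelMonoid (M i)] [∀ i, Finite (M i)] :
    ∃ n, 2 ≤ n ∧ ∀ i (g : M i), g ^ n = g := by
  classical
  have hexp : Monoid.exponent (∀ i, M i) ≠ 0 := Monoid.exponent_ne_zero_of_finite
  refine ⟨Monoid.exponent (∀ i, M i) + 1, by omega, fun i g => ?_⟩
  have hg : g ^ Monoid.exponent (∀ i, M i) = 1 := by
    simpa using congrFun (Monoid.pow_exponent_eq_one (Pi.mulSingle i g : ∀ i, M i)) i
  rw [pow_succ, hg, one_mul]

theorem Monoid.CoprodI.exists_ofFn_pow_prod_eq {ι : Type*} {M : ι → Type*}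
    [∀ i, Monoid (M i)] {n : ℕ} (hn : ∀ i (g : M i), g ^ n = g) (m : CoprodI M) :
    ∃ k, ∃ x : Fin k → CoprodI M, (List.ofFn fun j => x j ^ n).prod = m := by
  have hm : m ∈ Submonoid.closure {t : CoprodI M | t ^ n = t} := by
    refine Submonoid.closure_mono ?_ (mclosure_iUnion_range_of (M := M) ▸ Submonoid.mem_top m)
    rintro _ ⟨_, ⟨i, rfl⟩, g, rfl⟩
    exact (map_pow of g n).symm.trans (congrArg of (hn i g))
  obtain ⟨l, hl, rfl⟩ := Submonoid.exists_list_of_mem_closure hm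
  refine ⟨l.length, l.get, ?_⟩
  rw [show (fun j => l.get j ^ n) = l.get from funext fun j => hl _ (l.get_mem j),
    List.ofFn_get]

theorem FreeGroup.ofFn_pow_prod_ne_of {X : Type*} {n k : ℕ} (hn : 2 ≤ n)
    (y : Fin k → FreeGroup X) (x : X) : (List.ofFn fun j => y j ^ n).prod ≠ of x := by
  have : Fact (1 < n) := ⟨hn⟩
  let φ : FreeGroup X →* Multiplicative (ZMod n) := lift fun _ => .ofAdd 1
  have hpow : ∀ a : Multiplicative (ZMod n), a ^ n = 1 := fun a => by
    simpa using pow_card_eq_one (x := a)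
  intro h
  have hφ := congrArg φ h
  rw [map_list_prod, List.map_ofFn, List.prod_eq_one] at hφ
  · exact one_ne_zero (ofAdd_eq_one.mp (by simpa [φ] using hφ.symm) : (1 : ZMod n) = 0)
  · simp [Function.comp_def, hpow]

theorem free_subgroup_not_verballyClosed_general {ι : Type*} [Fintype ι]
    (G : ι → Type*) [∀ i, Group (G i)] [∀ i, Finite (G i)]
    (H : Subgroup (Monoid.CoprodI G)) (X : Type*) [Nonempty X]
    (e : H ≃* FreeGroup X) :
    ¬ VerballyClosed H := by
  intro hH
  obtain ⟨n, hn, hpow⟩ := exists_pow_eq_self_of_finite G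
  obtain ⟨x₀⟩ := ‹Nonempty X›
  obtain ⟨k, x, hx⟩ := Monoid.CoprodI.exists_ofFn_pow_prod_eq hpow
    (e.symm (.of x₀) : Monoid.CoprodI G)
  obtain ⟨y, hy⟩ := hH.exists_ofFn_pow_prod_eq _ x hx
  apply FreeGroup.ofFn_pow_prod_ne_of hn (e ∘ y) x₀
  rw [← e.apply_symm_apply (FreeGroup.of x₀), ← hy, map_list_prod, List.map_ofFn]
  simp [Function.comp_def]

/-- No nontrivial free subgroup of a free product of finitely many nontrivial finite
groups is verbally closed. -/
theorem free_subgroup_not_verballyClosed {ι : Type*} [Fintype ι] [Nonempty ι]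
    (G : ι → Type*) [∀ i, Group (G i)] [∀ i, Finite (G i)] [∀ i, Nontrivial (G i)]
    (H : Subgroup (Monoid.CoprodI G)) (X : Type*) [Nonempty X]
    (e : H ≃* FreeGroup X) :
    ¬ VerballyClosed H :=
  free_subgroup_not_verballyClosed_general G H X e
end

section
/- In a free product H₁ * H₂ of two nontrivial groups, if a ∈ H₁ \ {1} and b ∈ H₂ \ {1}, then the element ab is not a proper power: there is no w ∈ H₁ * H₂ and integer N ≥ 2 with w^N = ab. -/
/-!
Conjugating by a first or last letter shows that every element of a free product is conjugate
to one whose reduced word `c` is cyclically reduced; if `c` has length at least `2`, the reduced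
word of `c ^ n` is `c` repeated `n` times, again cyclically reduced, of length `n * |c| ≥ 4`.
On the other hand, peeling off the conjugator letter by letter shows that a conjugate of `ab`
is either a two-letter word or a reduced word `u (s t s') u⁻¹` that begins and ends in the same
factor. So `w ^ n = ab` with `n ≥ 2` is impossible: conjugating by `h`, `(h w h⁻¹) ^ n` would be
both. Working in `CoprodI` over `Bool` keeps the two factors symmetric, and a homomorphism from
`Coprod M N` carries the statement over.
-/

open Monoid

namespace Monoid.CoprodI

open List

section Monoid

variable {ι : Type*} {M : ι → Type*} [∀ i, Monoid (M i)]

def IsReduced (l : List (Σ i, M i)) : Prop :=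
  (∀ p ∈ l, p.2 ≠ 1) ∧ l.IsChain fun p q => p.1 ≠ q.1

def IsCyclicallyReduced (l : List (Σ i, M i)) : Prop :=
  l.length ≤ 1 ∨ l.head?.map Sigma.fst ≠ l.getLast?.map Sigma.fst

def listProd (l : List (Σ i, M i)) : CoprodI M :=
  (l.map fun p => of p.2).prod

@[simp] theorem listProd_nil : listProd ([] : List (Σ i, M i)) = 1 := rfl

@[simp] theorem listProd_cons (p : Σ i, M i) (l : List (Σ i, M i)) :
    listProd (p :: l) = of p.2 * listProd l := by
  simp [listProd]

@[simp] theorem listProd_append (l₁ l₂ : List (Σ i, M i)) :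
    listProd (l₁ ++ l₂) = listProd l₁ * listProd l₂ := by
  simp [listProd]

@[simp] theorem listProd_flatten_replicate (n : ℕ) (l : List (Σ i, M i)) :
    listProd (replicate n l).flatten = listProd l ^ n := by
  simp [listProd, List.prod_flatten, List.map_replicate]

theorem isReduced_nil : IsReduced ([] : List (Σ i, M i)) := by
  simp [IsReduced]

theorem isReduced_singleton {i : ι} {m : M i} : IsReduced [⟨i, m⟩] ↔ m ≠ 1 := by
  simp [IsReduced]

theorem isReduced_cons {p : Σ i, M i} {l : List (Σ i, M i)} :
    IsReduced (p :: l) ↔ p.2 ≠ 1 ∧ (∀ q ∈ l.head?, p.1 ≠ q.1) ∧ IsReduced l := by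
  simp only [IsReduced, List.mem_cons, forall_eq_or_imp, List.isChain_cons]
  tauto

theorem isReduced_append {l₁ l₂ : List (Σ i, M i)} :
    IsReduced (l₁ ++ l₂) ↔
      IsReduced l₁ ∧ IsReduced l₂ ∧ ∀ p ∈ l₁.getLast?, ∀ q ∈ l₂.head?, p.1 ≠ q.1 := by
  simp only [IsReduced, List.mem_append, List.isChain_append]
  grind

theorem exists_isReduced_listProd_eq (g : CoprodI M) : ∃ l, IsReduced l ∧ listProd l = g := by
  classical
  exact ⟨(Word.equiv g).toList, ⟨(Word.equiv g).ne_one, (Word.equiv g).chain_ne⟩,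
    Word.equiv.symm_apply_apply g⟩

theorem IsReduced.eq_of_listProd_eq {l₁ l₂ : List (Σ i, M i)} (h₁ : IsReduced l₁)
    (h₂ : IsReduced l₂) (h : listProd l₁ = listProd l₂) : l₁ = l₂ := by
  classical
  have : (⟨l₁, h₁.1, h₁.2⟩ : Word M) = ⟨l₂, h₂.1, h₂.2⟩ := Word.equiv.symm.injective h
  exact congrArg Word.toList this

theorem IsReduced.flatten_replicate {l : List (Σ i, M i)} (hl : IsReduced l)
    (hends : l.head?.map Sigma.fst ≠ l.getLast?.map Sigma.fst) (n : ℕ) :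
    IsReduced (replicate n l).flatten := by
  have hne : l ≠ [] := by rintro rfl; exact hends rfl
  refine ⟨fun p hp => ?_, ?_⟩
  · obtain ⟨l', hl', hp⟩ := List.mem_flatten.1 hp
    rw [List.eq_of_mem_replicate hl'] at hp
    exact hl.1 p hp
  · rw [List.isChain_flatten (by simp [hne.symm])]
    exact ⟨fun l' hl' => List.eq_of_mem_replicate hl' ▸ hl.2,
      List.isChain_replicate_of_rel n fun _ _ _ _ h => hends (by simp_all)⟩

end Monoid

section Group

variable {ι : Type*} {G : ι → Type*} [∀ i, Group (G i)]

def invRev (l : List (Σ i, G i)) : List (Σ i, G i) :=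
  (l.map fun p => ⟨p.1, p.2⁻¹⟩).reverse

@[simp] theorem listProd_invRev (l : List (Σ i, G i)) :
    listProd (invRev l) = (listProd l)⁻¹ := by
  simp [invRev, listProd, List.prod_inv_reverse, List.map_reverse, Function.comp_def]

theorem IsReduced.invRev {l : List (Σ i, G i)} (hl : IsReduced l) : IsReduced (invRev l) := by
  refine ⟨?_, ?_⟩
  · simp only [CoprodI.invRev, List.mem_reverse, List.mem_map]
    rintro _ ⟨p, hp, rfl⟩
    simpa using hl.1 p hp
  · rw [CoprodI.invRev, List.isChain_reverse, List.isChain_map]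
    exact hl.2.imp fun _ _ h => Ne.symm h

theorem head?_invRev (l : List (Σ i, G i)) :
    (invRev l).head? = l.getLast?.map fun p => ⟨p.1, p.2⁻¹⟩ := by
  simp [invRev, List.head?_reverse]

theorem getLast?_invRev (l : List (Σ i, G i)) :
    (invRev l).getLast? = l.head?.map fun p => ⟨p.1, p.2⁻¹⟩ := by
  simp [invRev, List.getLast?_reverse]

theorem exists_isReduced_listProd_eq_of_mul {i : ι} (a : G i) {l : List (Σ i, G i)}
    (hl : IsReduced l) (hhead : ∀ q ∈ l.head?, i ≠ q.1) :
    ∃ l', IsReduced l' ∧ l'.length ≤ l.length + 1 ∧ listProd l' = of a * listProd l := by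
  by_cases ha : a = 1
  · exact ⟨l, hl, by omega, by simp [ha]⟩
  · exact ⟨⟨i, a⟩ :: l, isReduced_cons.2 ⟨ha, hhead, hl⟩, by simp, by simp⟩

theorem exists_isReduced_conj_triple {u : List (Σ i, G i)} (hu : IsReduced u) {s t : ι}
    (hst : s ≠ t) (hlast : ∀ q ∈ u.getLast?, q.1 ≠ s) {a c : G s} {b : G t}
    (ha : a ≠ 1) (hb : b ≠ 1) (hc : c ≠ 1) :
    ∃ l, IsReduced l ∧ ¬ IsCyclicallyReduced l ∧
      listProd l = listProd u * (of a * of b * of c) * (listProd u)⁻¹ := by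
  refine ⟨u ++ [⟨s, a⟩, ⟨t, b⟩, ⟨s, c⟩] ++ invRev u, ?_, ?_, by simp [mul_assoc]⟩
  · refine isReduced_append.2 ⟨isReduced_append.2 ⟨hu, ?_, by simpa using hlast⟩,
      hu.invRev, ?_⟩
    · simp [IsReduced, ha, hb, hc, hst, hst.symm]
    · intro p hp q hq
      obtain rfl : p = ⟨s, c⟩ := by simpa using hp.symm
      obtain ⟨r, hr, rfl⟩ := Option.mem_map.1 (head?_invRev u ▸ hq)
      exact (hlast r hr).symm
  · cases u with
    | nil => simp [IsCyclicallyReduced, invRev]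
    | cons p u =>
      rw [IsCyclicallyReduced, List.getLast?_append, getLast?_invRev]
      simp

theorem exists_isCyclicallyReduced_conj (g : CoprodI G) :
    ∃ h l, IsReduced l ∧ IsCyclicallyReduced l ∧ listProd l = h * g * h⁻¹ := by
  obtain ⟨l, hl, rfl⟩ := exists_isReduced_listProd_eq g
  induction hn : l.length using Nat.strong_induction_on generalizing l with
  | _ n ih =>
  by_cases hc : IsCyclicallyReduced l
  · exact ⟨1, l, hl, hc, by simp⟩
  obtain ⟨hlen, hends⟩ :
      1 < l.length ∧ l.head?.map Sigma.fst = l.getLast?.map Sigma.fst := by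
    simpa [IsCyclicallyReduced, not_or] using hc
  obtain ⟨⟨i, a⟩, r, rfl⟩ := List.exists_cons_of_ne_nil (l := l) (by rintro rfl; simp at hlen)
  obtain ⟨m, ⟨i', b⟩, rfl⟩ :=
    (List.eq_nil_or_concat' r).resolve_left (by rintro rfl; simp at hlen)
  obtain rfl : i = i' := by
    simpa [List.getLast?_cons, List.getLast?_append] using hends
  obtain ⟨-, hhead, hm⟩ := isReduced_cons.1 hl
  obtain ⟨m', hm', hm'len, hm'prod⟩ := exists_isReduced_listProd_eq_of_mul (b * a)
    (isReduced_append.1 hm).1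
    fun q hq => hhead q (by simp [List.head?_append, Option.mem_def.1 hq])
  obtain ⟨h, l', hl', hc', hl'prod⟩ := ih m'.length (by simp at hn; omega) m' hm' rfl
  -- conjugating by the last letter merges it into the first one
  refine ⟨h * of b, l', hl', hc', ?_⟩
  rw [hl'prod, hm'prod]
  simp only [listProd_cons, listProd_append, listProd_nil, map_mul]
  group

theorem IsCyclicallyReduced.exists_pow {l : List (Σ i, G i)} (hl : IsReduced l)
    (hc : IsCyclicallyReduced l) (n : ℕ) :
    ∃ L, IsReduced L ∧ IsCyclicallyReduced L ∧ listProd L = listProd l ^ n ∧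
      (L.length ≤ 1 ∨ 2 ≤ l.length ∧ L.length = n * l.length) := by
  rcases hc with hlen | hends
  · match l, hlen with
    | [], _ => exact ⟨[], isReduced_nil, Or.inl (by simp), by simp, Or.inl (by simp)⟩
    | [⟨i, a⟩], _ =>
      by_cases ha : a ^ n = 1
      · exact ⟨[], isReduced_nil, Or.inl (by simp), by simp [← map_pow, ha], Or.inl (by simp)⟩
      · exact ⟨[⟨i, a ^ n⟩], isReduced_singleton.2 ha, Or.inl (by simp), by simp,
          Or.inl (by simp)⟩
  · have hlen : 2 ≤ l.length := by
      rcases l with _ | ⟨p, _ | ⟨q, l⟩⟩ <;> simp_all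
    refine ⟨_, hl.flatten_replicate hends n, ?_, by simp, Or.inr ⟨hlen, by simp⟩⟩
    rcases eq_or_ne n 0 with rfl | hn
    · simp [IsCyclicallyReduced]
    · simpa [IsCyclicallyReduced, hn] using Or.inr hends

end Group

theorem exists_isReduced_conj_of_mul_of {G : Bool → Type*} [∀ i, Group (G i)]
    (g : CoprodI G) {i j : Bool} (hij : i ≠ j) {x : G i} {y : G j} (hx : x ≠ 1) (hy : y ≠ 1) :
    ∃ l, IsReduced l ∧ listProd l = g * (of x * of y) * g⁻¹ ∧
      (l.length = 2 ∨ ¬ IsCyclicallyReduced l) := by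
  obtain ⟨u, hu, rfl⟩ := exists_isReduced_listProd_eq g
  induction u using List.reverseRecOn generalizing i j with
  | nil => exact ⟨[⟨i, x⟩, ⟨j, y⟩], by simp [IsReduced, hx, hy, hij], by simp, Or.inl rfl⟩
  | append_singleton u p ih =>
    obtain ⟨k, z⟩ := p
    obtain ⟨hu, hz, hlast⟩ : IsReduced u ∧ z ≠ 1 ∧ ∀ q ∈ u.getLast?, q.1 ≠ k := by
      simpa [isReduced_append, isReduced_singleton] using hu
    -- `z` either cancels against `x` or `y`, leaving a shorter conjugator of a two-letter word,
    -- or survives in the reduced word `u (z x) y z⁻¹ u⁻¹`, resp. `u z x (y z⁻¹) u⁻¹`.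
    obtain rfl | rfl : k = i ∨ k = j := by
      cases i <;> cases j <;> cases k <;> simp_all
    · by_cases hzx : z * x = 1
      · obtain ⟨l, hl, hprod, hlen⟩ := ih hij.symm hy (inv_ne_one.2 hz) hu
        refine ⟨l, hl, ?_, hlen⟩
        rw [hprod, eq_inv_of_mul_eq_one_right hzx]
        simp only [listProd_append, listProd_cons, listProd_nil, map_inv]
        group
      · obtain ⟨l, hl, hnc, hprod⟩ :=
          exists_isReduced_conj_triple hu hij hlast hzx hy (inv_ne_one.2 hz)
        refine ⟨l, hl, ?_, Or.inr hnc⟩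
        rw [hprod]
        simp only [listProd_append, listProd_cons, listProd_nil, map_mul, map_inv]
        group
    · by_cases hyz : y * z⁻¹ = 1
      · obtain ⟨l, hl, hprod, hlen⟩ := ih hij.symm hz hx hu
        refine ⟨l, hl, ?_, hlen⟩
        rw [hprod, mul_inv_eq_one.1 hyz]
        simp only [listProd_append, listProd_cons, listProd_nil]
        group
      · obtain ⟨l, hl, hnc, hprod⟩ :=
          exists_isReduced_conj_triple hu hij.symm hlast hz hx hyz
        refine ⟨l, hl, ?_, Or.inr hnc⟩
        rw [hprod]
        simp only [listProd_append, listProd_cons, listProd_nil, map_mul, map_inv]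
        group

theorem of_mul_of_ne_pow {G : Bool → Type*} [∀ i, Group (G i)] {i j : Bool} (hij : i ≠ j)
    {x : G i} {y : G j} (hx : x ≠ 1) (hy : y ≠ 1) (w : CoprodI G) {n : ℕ} (hn : 2 ≤ n) :
    w ^ n ≠ of x * of y := by
  intro hw
  obtain ⟨h, l, hl, hcyc, hlw⟩ := exists_isCyclicallyReduced_conj w
  obtain ⟨L, hL, hLcyc, hLpow, hLlen⟩ := hcyc.exists_pow hl n
  obtain ⟨l', hl', hl'conj, hl'len⟩ := exists_isReduced_conj_of_mul_of h hij hx hy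
  obtain rfl : L = l' := hL.eq_of_listProd_eq hl' (by rw [hLpow, hlw, conj_pow, hw, hl'conj])
  rcases hl'len with h2 | hnc
  · rcases hLlen with h1 | ⟨hl2, hmul⟩
    · omega
    · nlinarith
  · exact hnc hLcyc

end Monoid.CoprodI

universe u v

abbrev pairFamily (M : Type u) (N : Type v) : Bool → Type max u v
  | false => ULift M
  | true => ULift N

instance pairFamily.instGroup (M : Type u) (N : Type v) [Group M] [Group N] :
    ∀ b, Group (pairFamily M N b)
  | false => inferInstanceAs (Group (ULift M))
  | true => inferInstanceAs (Group (ULift N))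

/-- In a free product `H₁ * H₂`, the product `ab` of nontrivial elements `a ∈ H₁`,
`b ∈ H₂` is not a proper power. -/
theorem coprod_mixed_product_not_proper_power {M N : Type*} [Group M] [Group N]
    (a : M) (b : N) (ha : a ≠ 1) (hb : b ≠ 1) :
    ¬ ∃ (w : Coprod M N) (k : ℤ), 2 ≤ k ∧
        w ^ k = Coprod.inl a * Coprod.inr b := by
  rintro ⟨w, k, hk, hw⟩
  lift k to ℕ using by omega
  let φ : Coprod M N →* CoprodI (pairFamily M N) :=
    Coprod.lift ((CoprodI.of (i := false)).comp MulEquiv.ulift.symm.toMonoidHom)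
      ((CoprodI.of (i := true)).comp MulEquiv.ulift.symm.toMonoidHom)
  refine CoprodI.of_mul_of_ne_pow Bool.false_ne_true
    ((MulEquiv.map_ne_one_iff MulEquiv.ulift.symm).2 ha)
    ((MulEquiv.map_ne_one_iff MulEquiv.ulift.symm).2 hb) (φ w) (by exact_mod_cast hk) ?_
  simpa [φ] using congrArg φ hw
end
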